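/- Let n ≥ 2, let w(x) := 1/sin(x) on D := (−π,0) ∪ (0,π) (the trigonometric, type III, Calogero–Moser case), and let U be a nonempty convex open subset of {q ∈ ℝ^n : α·q ∈ D for all α ∈ Φ}. Define on U, for each α ∈ Φ and 1 ≤ i ≤ n: R^{αα} := 0; R^{−α,α} := −w′_α/w_α (so that R^{α,−α} = w′_α/w_α); and R^{iα} := −(1/2) w_α if α·e_i ≠ 0, R^{iα} := 0 otherwise. Then these functions satisfy the constraints (★): R^{α,−α} + R^{−α,α} = 0, R^{αα} + R^{−α,−α} = 0, R^{αα} + R^{−α,α} = −w′_α/w_α; the relation −w′_α = R^{−α,α} w_α − R^{αα} w_{−α}; and the equation (†): for all α, β ∈ Φ with α ≠ ±β, α·(R^{β} − R^{−β}) w_α = c^β_{α,β−α}(−w′_α/w_α − w′_β/w_β + 2R^{α,−α}) w_{β−α} − c^β_{−α,β+α}(−w′_α/w_α + w′_β/w_β + 2R^{α,−α}) w_{β+α} (terms with β∓α not a root absent). That is, this gives a momentum-independent R-matrix for the trigonometric Calogero–Moser model. -/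
import Mathlib


open scoped Classical

noncomputable section

/-- The `i`-th standard basis vector of `ℝ^n`. -/
def stdE {n : ℕ} (i : Fin n) : Fin n → ℝ := fun k => if k = i then 1 else 0

/-- The set of roots of `gl_n`: `Φ = {e_i − e_j : i ≠ j}`. -/
def Phi (n : ℕ) : Set (Fin n → ℝ) :=
  {x | ∃ i j : Fin n, i ≠ j ∧ x = stdE i - stdE j}

/-- Euclidean dot product on `ℝ^n`. -/
def dotR {n : ℕ} (x y : Fin n → ℝ) : ℝ := ∑ k, x k * y k

/-- Structure constants of `gl_n`: for roots `α = e_a − e_b`, `γ = e_c − e_d` with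
`α + γ ∈ Φ`, `cst α γ = δ_{bc} − δ_{da}` (the coefficient of `e_{α+γ}` in
`[e_{ab}, e_{cd}] = δ_{bc} e_{ad} − δ_{da} e_{cb}`), and `cst α γ = 0` in every
other case (in particular when a subscript fails to be a root, so that terms
containing `cst` with a non-root subscript are absent). -/
def cst {n : ℕ} (α γ : Fin n → ℝ) : ℝ :=
  if α ∈ Phi n ∧ γ ∈ Phi n ∧ α + γ ∈ Phi n then
    (∑ k, max (-(α k)) 0 * max (γ k) 0) - (∑ k, max (α k) 0 * max (-(γ k)) 0)
  else 0

/-- Sum of a quantity over all roots `α ∈ Φ` (each root `e_i − e_j`, `i ≠ j`,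
occurring exactly once). -/
def sumPhi {n : ℕ} (f : (Fin n → ℝ) → ℂ) : ℂ :=
  ∑ p ∈ (Finset.univ : Finset (Fin n)).offDiag, f (stdE p.1 - stdE p.2)

/-- `z(x) = w″(x)/(2 w(x))`. -/
def zfun (w : ℝ → ℂ) (x : ℝ) : ℂ := deriv (deriv w) x / (2 * w x)

/-- `w(x) = 1/sin x` (trigonometric, type III potential). -/
def wtrig : ℝ → ℂ := fun x => ((Real.sin x : ℂ))⁻¹

/-- `D = (−π, 0) ∪ (0, π)`. -/
def Dtrig : Set ℝ := Set.Ioo (-Real.pi) 0 ∪ Set.Ioo 0 Real.pi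

/-- `R^{−α,α} := −w′_α/w_α` (so that `R^{α,−α} = w′_α/w_α`). -/
def RnegTrig {n : ℕ} (α q : Fin n → ℝ) : ℂ :=
  -(deriv wtrig (dotR α q)) / wtrig (dotR α q)

/-- `R^{αα} := 0`. -/
def RsameTrig {n : ℕ} (_α _q : Fin n → ℝ) : ℂ := 0

/-- `R^{iα} := −(1/2) w_α` if `α·e_i ≠ 0`, and `0` otherwise. -/
def RhRTrig {n : ℕ} (i : Fin n) (α q : Fin n → ℝ) : ℂ :=
  if α i ≠ 0 then -(1/2 : ℂ) * wtrig (dotR α q) else 0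

lemma dotR_sub' {n : ℕ} (x y q : Fin n → ℝ) : dotR (x - y) q = dotR x q - dotR y q := by
  simp [dotR, sub_mul, Finset.sum_sub_distrib]

lemma dotR_add' {n : ℕ} (x y q : Fin n → ℝ) : dotR (x + y) q = dotR x q + dotR y q := by
  simp [dotR, add_mul, Finset.sum_add_distrib]

lemma dotR_neg' {n : ℕ} (x q : Fin n → ℝ) : dotR (-x) q = -dotR x q := by
  simp [dotR]

lemma sin_ne_zero_of_Dtrig {x : ℝ} (hx : x ∈ Dtrig) : Real.sin x ≠ 0 := by
  rcases hx with h | h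
  · have h1 : 0 < Real.sin (-x) :=
      Real.sin_pos_of_pos_of_lt_pi (by linarith [h.2]) (by linarith [h.1])
    rw [Real.sin_neg] at h1; intro h2; rw [h2] at h1; simp at h1
  · exact ne_of_gt (Real.sin_pos_of_pos_of_lt_pi h.1 h.2)

lemma wtrig_ne_zero {x : ℝ} (hx : Real.sin x ≠ 0) : wtrig x ≠ 0 :=
  inv_ne_zero (by exact_mod_cast hx)

lemma wtrig_neg (x : ℝ) : wtrig (-x) = -wtrig x := by
  simp only [wtrig, Real.sin_neg, Complex.ofReal_neg, inv_neg]

lemma deriv_wtrig {x : ℝ} (hx : Real.sin x ≠ 0) :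
    deriv wtrig x = -((Real.cos x : ℂ)) / ((Real.sin x : ℂ)) ^ 2 := by
  have h0 : ((Real.sin x : ℂ)) ≠ 0 := by exact_mod_cast hx
  have h1 : HasDerivAt (fun t : ℝ => ((Real.sin t : ℂ))) ((Real.cos x : ℂ)) x :=
    (Real.hasDerivAt_sin x).ofReal_comp
  have h3 : HasDerivAt ((fun z : ℂ => z⁻¹) ∘ (fun t : ℝ => ((Real.sin t : ℂ))))
      (-(((Real.sin x : ℂ)) ^ 2)⁻¹ * (Real.cos x : ℂ)) x :=
    HasDerivAt.comp_of_eq x (hasDerivAt_inv h0) h1 rfl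
  have h4 : HasDerivAt wtrig (-(((Real.sin x : ℂ)) ^ 2)⁻¹ * (Real.cos x : ℂ)) x := h3
  rw [h4.deriv]; field_simp

lemma mem_Phi {n : ℕ} {a b : Fin n} (h : a ≠ b) : stdE a - stdE b ∈ Phi n := ⟨a, b, h, rfl⟩

lemma Phi_apply_le_one {n : ℕ} {x : Fin n → ℝ} (hx : x ∈ Phi n) (k : Fin n) : x k ≤ 1 := by
  obtain ⟨i, j, hij, rfl⟩ := hx
  by_cases h1 : k = i <;> by_cases h2 : k = j <;> simp [stdE, h1, h2, hij, Ne.symm hij] <;> norm_num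

lemma Phi_neg_one_le {n : ℕ} {x : Fin n → ℝ} (hx : x ∈ Phi n) (k : Fin n) : -1 ≤ x k := by
  obtain ⟨i, j, hij, rfl⟩ := hx
  by_cases h1 : k = i <;> by_cases h2 : k = j <;> simp [stdE, h1, h2, hij, Ne.symm hij] <;> norm_num

lemma Phi_eq_one {n : ℕ} {x : Fin n → ℝ} (hx : x ∈ Phi n) {k l : Fin n}
    (hk : x k = 1) (hl : x l = 1) : k = l := by
  obtain ⟨i, j, hij, rfl⟩ := hx
  have hki : k = i := by
    by_contra h1
    by_cases h2 : k = j <;> simp [stdE, h1, h2, hij, Ne.symm hij] at hk <;> norm_num at hk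
  have hli : l = i := by
    by_contra h1
    by_cases h2 : l = j <;> simp [stdE, h1, h2, hij, Ne.symm hij] at hl <;> norm_num at hl
  rw [hki, hli]

lemma cst_zero_snd {n : ℕ} (α γ : Fin n → ℝ) (h : γ ∉ Phi n) : cst α γ = 0 := by
  rw [cst, if_neg]; tauto

lemma cst_eval {n : ℕ} {a b p r : Fin n} (hab : a ≠ b) (hpr : p ≠ r)
    (hsum : (stdE a - stdE b) + (stdE p - stdE r) ∈ Phi n) :
    cst (stdE a - stdE b) (stdE p - stdE r)
      = (if b = p then (1 : ℝ) else 0) - (if a = r then (1 : ℝ) else 0) := by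
  rw [cst, if_pos ⟨mem_Phi hab, mem_Phi hpr, hsum⟩]
  congr 1
  · have h1 : ∀ k, max (-((stdE a - stdE b) k)) 0 * max ((stdE p - stdE r) k) 0
        = if k = b then (if b = p then (1 : ℝ) else 0) else 0 := by
      intro k
      by_cases h2 : k = b
      · subst h2
        by_cases h3 : k = p
        · subst h3
          simp [stdE, Ne.symm hab, hpr]
        · simp [stdE, Ne.symm hab, h3]
          split <;> norm_num
      · by_cases h3 : k = a
        · subst h3; simp [stdE, hab, h2]
        · simp [stdE, h2, h3]
    rw [Finset.sum_congr rfl fun k _ => h1 k]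
    simp [Finset.sum_ite_eq']
  · have h1 : ∀ k, max ((stdE a - stdE b) k) 0 * max (-((stdE p - stdE r) k)) 0
        = if k = a then (if a = r then (1 : ℝ) else 0) else 0 := by
      intro k
      by_cases h2 : k = a
      · subst h2
        by_cases h3 : k = r
        · subst h3
          simp [stdE, hab, Ne.symm hpr]
        · simp [stdE, hab, h3]
          split <;> norm_num
      · by_cases h3 : k = b
        · subst h3; simp [stdE, Ne.symm hab, h2]
        · simp [stdE, h2, h3]
    rw [Finset.sum_congr rfl fun k _ => h1 k]
    simp [Finset.sum_ite_eq']

lemma RnegTrig_neg_eval {n : ℕ} (α q : Fin n → ℝ) (h : Real.sin (dotR α q) ≠ 0) :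
    RnegTrig (-α) q = -((Real.cos (dotR α q) : ℂ)) * ((Real.sin (dotR α q) : ℂ))⁻¹ := by
  have h2 : Real.sin (-(dotR α q)) ≠ 0 := by simpa [Real.sin_neg] using neg_ne_zero.mpr h
  have hs : ((Real.sin (dotR α q) : ℂ)) ≠ 0 := by exact_mod_cast h
  rw [RnegTrig, dotR_neg', deriv_wtrig h2, wtrig_neg, Real.cos_neg, Real.sin_neg]
  have hs' : Complex.sin ((dotR α q : ℝ) : ℂ) ≠ 0 := by
    rw [← Complex.ofReal_sin]; exact hs
  simp only [wtrig, Complex.ofReal_neg]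
  field_simp [hs']

lemma lhs_sum {n : ℕ} (a b c d : Fin n) (hcd : c ≠ d) (q : Fin n → ℝ) :
    (∑ i, (((stdE a - stdE b) i : ℝ) : ℂ) *
        (RhRTrig i (stdE c - stdE d) q - RhRTrig i (-(stdE c - stdE d)) q))
      = -((((stdE a - stdE b) c : ℝ) : ℂ) + (((stdE a - stdE b) d : ℝ) : ℂ)) *
          wtrig (dotR (stdE c - stdE d) q) := by
  set β : Fin n → ℝ := stdE c - stdE d with hβ
  set w : ℂ := wtrig (dotR β q) with hw
  have hwneg : wtrig (dotR (-β) q) = -w := by rw [dotR_neg', wtrig_neg]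
  have hptw : ∀ i, (((stdE a - stdE b) i : ℝ) : ℂ) * (RhRTrig i β q - RhRTrig i (-β) q)
      = (if i = c then (((stdE a - stdE b) c : ℝ) : ℂ) * (-w) else 0)
        + (if i = d then (((stdE a - stdE b) d : ℝ) : ℂ) * (-w) else 0) := by
    intro i
    by_cases h1 : i = c
    · subst h1
      have hb1 : β i ≠ 0 := by simp [hβ, stdE, hcd]
      have hb2 : (-β) i ≠ 0 := by simpa using hb1
      rw [RhRTrig, RhRTrig, if_pos hb1, if_pos hb2, hwneg, if_pos rfl,
        if_neg hcd]
      ring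
    · by_cases h2 : i = d
      · subst h2
        have hb1 : β i ≠ 0 := by simp [hβ, stdE, Ne.symm hcd, h1]
        have hb2 : (-β) i ≠ 0 := by simpa using hb1
        rw [RhRTrig, RhRTrig, if_pos hb1, if_pos hb2, hwneg, if_neg h1, if_pos rfl]
        ring
      · have hb1 : ¬ (β i ≠ 0) := by simp [hβ, stdE, h1, h2]
        have hb2 : ¬ ((-β) i ≠ 0) := by simpa using hb1
        rw [RhRTrig, RhRTrig, if_neg hb1, if_neg hb2, if_neg h1, if_neg h2]
        ring
  rw [Finset.sum_congr rfl fun i _ => hptw i, Finset.sum_add_distrib]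
  simp [Finset.sum_ite_eq']
  ring

lemma root_eq_iff {n : ℕ} {a b c d : Fin n} (hab : a ≠ b) (hcd : c ≠ d)
    (h : stdE a - stdE b = stdE c - stdE d) : a = c ∧ b = d := by
  have hmem : stdE c - stdE d ∈ Phi n := mem_Phi hcd
  have hac : a = c := by
    refine Phi_eq_one hmem ?_ ?_
    · rw [← h]; simp [stdE, hab]
    · simp [stdE, hcd]
  have hone : (stdE c - stdE d) b = -1 := by rw [← h]; simp [stdE, Ne.symm hab]
  have hbd : b = d := by
    by_contra h2
    by_cases h3 : b = c <;> simp [stdE, h2, h3, hcd, Ne.symm hcd] at hone <;> norm_num at hone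
  exact ⟨hac, hbd⟩

lemma ccalc_sub (Sx Cx Sy Cy Sxy : ℂ) (hSx : Sx ≠ 0) (hSy : Sy ≠ 0) (hSxy : Sxy ≠ 0)
    (hrel : Sxy = Sy * Cx - Cy * Sx) :
    (-(-Cx / Sx ^ 2) / Sx⁻¹ - -Cy / Sy ^ 2 / Sy⁻¹ + 2 * (-Cx * Sx⁻¹)) * Sxy⁻¹
      = -(Sx⁻¹ * Sy⁻¹) := by
  have h1 : (-(-Cx / Sx ^ 2) / Sx⁻¹ - -Cy / Sy ^ 2 / Sy⁻¹ + 2 * (-Cx * Sx⁻¹))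
      = -Sxy * (Sx⁻¹ * Sy⁻¹) := by
    rw [hrel]; field_simp; ring
  rw [h1, show -Sxy * (Sx⁻¹ * Sy⁻¹) * Sxy⁻¹ = -(Sxy * Sxy⁻¹) * (Sx⁻¹ * Sy⁻¹) by ring,
    mul_inv_cancel₀ hSxy]
  ring

lemma ccalc_add (Sx Cx Sy Cy Sxy : ℂ) (hSx : Sx ≠ 0) (hSy : Sy ≠ 0) (hSxy : Sxy ≠ 0)
    (hrel : Sxy = Sy * Cx + Cy * Sx) :
    (-(-Cx / Sx ^ 2) / Sx⁻¹ + -Cy / Sy ^ 2 / Sy⁻¹ + 2 * (-Cx * Sx⁻¹)) * Sxy⁻¹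
      = -(Sx⁻¹ * Sy⁻¹) := by
  have h1 : (-(-Cx / Sx ^ 2) / Sx⁻¹ + -Cy / Sy ^ 2 / Sy⁻¹ + 2 * (-Cx * Sx⁻¹))
      = -Sxy * (Sx⁻¹ * Sy⁻¹) := by
    rw [hrel]; field_simp; ring
  rw [h1, show -Sxy * (Sx⁻¹ * Sy⁻¹) * Sxy⁻¹ = -(Sxy * Sxy⁻¹) * (Sx⁻¹ * Sy⁻¹) by ring,
    mul_inv_cancel₀ hSxy]
  ring

lemma trig_sub (x y z : ℝ) (hx : Real.sin x ≠ 0) (hy : Real.sin y ≠ 0)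
    (hz : Real.sin z ≠ 0) (hrel : z = y - x) :
    (-(deriv wtrig x) / wtrig x - deriv wtrig y / wtrig y
        + 2 * (-((Real.cos x : ℂ)) * ((Real.sin x : ℂ))⁻¹)) * wtrig z
      = -(wtrig x * wtrig y) := by
  have hx' : ((Real.sin x : ℂ)) ≠ 0 := by exact_mod_cast hx
  have hy' : ((Real.sin y : ℂ)) ≠ 0 := by exact_mod_cast hy
  have hz' : ((Real.sin z : ℂ)) ≠ 0 := by exact_mod_cast hz
  rw [deriv_wtrig hx, deriv_wtrig hy]
  simp only [wtrig]
  refine ccalc_sub _ _ _ _ _ hx' hy' hz' ?_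
  rw [hrel, Real.sin_sub]
  push_cast
  ring

lemma trig_add (x y z : ℝ) (hx : Real.sin x ≠ 0) (hy : Real.sin y ≠ 0)
    (hz : Real.sin z ≠ 0) (hrel : z = y + x) :
    (-(deriv wtrig x) / wtrig x + deriv wtrig y / wtrig y
        + 2 * (-((Real.cos x : ℂ)) * ((Real.sin x : ℂ))⁻¹)) * wtrig z
      = -(wtrig x * wtrig y) := by
  have hx' : ((Real.sin x : ℂ)) ≠ 0 := by exact_mod_cast hx
  have hy' : ((Real.sin y : ℂ)) ≠ 0 := by exact_mod_cast hy
  have hz' : ((Real.sin z : ℂ)) ≠ 0 := by exact_mod_cast hz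
  rw [deriv_wtrig hx, deriv_wtrig hy]
  simp only [wtrig]
  refine ccalc_add _ _ _ _ _ hx' hy' hz' ?_
  rw [hrel, Real.sin_add]
  push_cast
  ring


/-- The displayed functions give a momentum-independent R-matrix for the
trigonometric Calogero–Moser model: they satisfy the constraints (★), the
relation `−w′_α = R^{−α,α} w_α − R^{αα} w_{−α}`, and equation (†). -/
theorem statement11
    (n : ℕ) (hn : 2 ≤ n)
    (U : Set (Fin n → ℝ)) (hUne : U.Nonempty) (hUconv : Convex ℝ U)
    (hUopen : IsOpen U) (hUD : ∀ q ∈ U, ∀ α ∈ Phi n, dotR α q ∈ Dtrig) :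
    (∀ q ∈ U, ∀ α ∈ Phi n,
      (RnegTrig (-α) q + RnegTrig α q = 0) ∧
      (RsameTrig α q + RsameTrig (-α) q = 0) ∧
      (RsameTrig α q + RnegTrig α q
        = -(deriv wtrig (dotR α q)) / wtrig (dotR α q)) ∧
      (-(deriv wtrig (dotR α q)) =
        RnegTrig α q * wtrig (dotR α q) - RsameTrig α q * wtrig (dotR (-α) q))) ∧
    (∀ q ∈ U, ∀ α ∈ Phi n, ∀ β ∈ Phi n, α ≠ β → α ≠ -β →
      (∑ i, (α i : ℂ) * (RhRTrig i β q - RhRTrig i (-β) q)) * wtrig (dotR α q) =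
        (cst α (β - α) : ℂ) *
            (-(deriv wtrig (dotR α q)) / wtrig (dotR α q)
              - deriv wtrig (dotR β q) / wtrig (dotR β q)
              + 2 * RnegTrig (-α) q) * wtrig (dotR (β - α) q)
          - (cst (-α) (β + α) : ℂ) *
              (-(deriv wtrig (dotR α q)) / wtrig (dotR α q)
                + deriv wtrig (dotR β q) / wtrig (dotR β q)
                + 2 * RnegTrig (-α) q) * wtrig (dotR (β + α) q)) := by
  constructor
  · rintro q hq α hα
    have hsx : Real.sin (dotR α q) ≠ 0 := sin_ne_zero_of_Dtrig (hUD q hq α hα)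
    have hw : wtrig (dotR α q) ≠ 0 := wtrig_ne_zero hsx
    refine ⟨?_, by simp [RsameTrig], by simp [RsameTrig, RnegTrig], ?_⟩
    · rw [RnegTrig_neg_eval α q hsx, RnegTrig, deriv_wtrig hsx]
      have hsx' : Complex.sin ((dotR α q : ℝ) : ℂ) ≠ 0 := by
        rw [← Complex.ofReal_sin]; exact_mod_cast hsx
      simp only [wtrig]
      field_simp [hsx']
      ring
    · simp only [RsameTrig, zero_mul, sub_zero, RnegTrig]
      exact (div_mul_cancel₀ _ hw).symm
  · rintro q hq α hα β hβ hne1 hne2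
    obtain ⟨a, b, hab, rfl⟩ := hα
    obtain ⟨c, d, hcd, rfl⟩ := hβ
    have hne1' : ¬(a = c ∧ b = d) := by
      rintro ⟨h1, h2⟩; subst h1; subst h2; exact hne1 rfl
    have hne2' : ¬(a = d ∧ b = c) := by
      rintro ⟨h1, h2⟩; subst h1; subst h2; exact hne2 (neg_sub _ _).symm
    have hsx : Real.sin (dotR (stdE a - stdE b) q) ≠ 0 :=
      sin_ne_zero_of_Dtrig (hUD q hq _ (mem_Phi hab))
    have hsy : Real.sin (dotR (stdE c - stdE d) q) ≠ 0 :=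
      sin_ne_zero_of_Dtrig (hUD q hq _ (mem_Phi hcd))
    rw [lhs_sum a b c d hcd q, RnegTrig_neg_eval _ q hsx]
    by_cases hac : a = c
    · -- pattern 1
      subst hac
      have had : a ≠ d := hcd
      have hbd : b ≠ d := fun h => hne1' ⟨rfl, h⟩
      have e1 : stdE a - stdE d - (stdE a - stdE b) = stdE b - stdE d := by abel
      have hs3 : Real.sin (dotR (stdE b - stdE d) q) ≠ 0 :=
        sin_ne_zero_of_Dtrig (hUD q hq _ (mem_Phi hbd))
      have hnp : stdE a - stdE d + (stdE a - stdE b) ∉ Phi n := by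
        intro h
        have h2 := Phi_apply_le_one h a
        simp [stdE, hab, had] at h2
        norm_num at h2
      have hc1 : cst (stdE a - stdE b) (stdE b - stdE d) = 1 := by
        rw [cst_eval hab hbd
          (by rw [show stdE a - stdE b + (stdE b - stdE d) = stdE a - stdE d from by abel]
              exact mem_Phi had)]
        simp [had]
      rw [e1, hc1, cst_zero_snd _ _ hnp]
      simp only [mul_assoc]
      rw [trig_sub (dotR (stdE a - stdE b) q) (dotR (stdE a - stdE d) q) _ hsx hsy hs3
          (by rw [← dotR_sub', e1])]
      have hv1 : (stdE a - stdE b) a = 1 := by simp [stdE, hab]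
      have hv2 : (stdE a - stdE b) d = 0 := by simp [stdE, Ne.symm had, Ne.symm hbd]
      rw [hv1, hv2]
      push_cast
      ring
    · by_cases hbd : b = d
      · -- pattern 4
        subst hbd
        have hca : c ≠ a := fun h => hne1' ⟨h.symm, rfl⟩
        have e1 : stdE c - stdE b - (stdE a - stdE b) = stdE c - stdE a := by abel
        have hs3 : Real.sin (dotR (stdE c - stdE a) q) ≠ 0 :=
          sin_ne_zero_of_Dtrig (hUD q hq _ (mem_Phi hca))
        have hnp : stdE c - stdE b + (stdE a - stdE b) ∉ Phi n := by
          intro h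
          have h2 := Phi_neg_one_le h b
          simp [stdE, Ne.symm hab, Ne.symm hcd] at h2
          norm_num at h2
        have hc1 : cst (stdE a - stdE b) (stdE c - stdE a) = -1 := by
          rw [cst_eval hab hca
            (by rw [show stdE a - stdE b + (stdE c - stdE a) = stdE c - stdE b from by abel]
                exact mem_Phi hcd)]
          simp [Ne.symm hcd]
        rw [e1, hc1, cst_zero_snd _ _ hnp]
        simp only [mul_assoc]
        rw [trig_sub (dotR (stdE a - stdE b) q) (dotR (stdE c - stdE b) q) _ hsx hsy hs3
            (by rw [← dotR_sub', e1])]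
        have hv1 : (stdE a - stdE b) c = 0 := by simp [stdE, hca, hcd]
        have hv2 : (stdE a - stdE b) b = -1 := by simp [stdE, Ne.symm hab]
        rw [hv1, hv2]
        push_cast
        ring
      · by_cases hbc : b = c
        · -- pattern 3
          subst hbc
          have had : a ≠ d := fun h => hne2' ⟨h, rfl⟩
          have e2 : stdE b - stdE d + (stdE a - stdE b) = stdE a - stdE d := by abel
          have hs3 : Real.sin (dotR (stdE a - stdE d) q) ≠ 0 :=
            sin_ne_zero_of_Dtrig (hUD q hq _ (mem_Phi had))
          have hnp : stdE b - stdE d - (stdE a - stdE b) ∉ Phi n := by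
            intro h
            have h2 := Phi_apply_le_one h b
            simp [stdE, Ne.symm hab, hcd] at h2
            norm_num at h2
          have hc2 : cst (-(stdE a - stdE b)) (stdE a - stdE d) = 1 := by
            rw [neg_sub, cst_eval (Ne.symm hab) had
              (by rw [show stdE b - stdE a + (stdE a - stdE d) = stdE b - stdE d from by abel]
                  exact mem_Phi hcd)]
            simp [hcd]
          rw [e2, cst_zero_snd _ _ hnp, hc2]
          simp only [mul_assoc]
          rw [trig_add (dotR (stdE a - stdE b) q) (dotR (stdE b - stdE d) q) _ hsx hsy hs3
              (by rw [← dotR_add', e2])]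
          have hv1 : (stdE a - stdE b) b = -1 := by simp [stdE, Ne.symm hab]
          have hv2 : (stdE a - stdE b) d = 0 := by simp [stdE, Ne.symm had, Ne.symm hcd]
          rw [hv1, hv2]
          push_cast
          ring
        · by_cases had : a = d
          · -- pattern 2
            subst had
            have e2 : stdE c - stdE a + (stdE a - stdE b) = stdE c - stdE b := by abel
            have hs3 : Real.sin (dotR (stdE c - stdE b) q) ≠ 0 :=
              sin_ne_zero_of_Dtrig (hUD q hq _ (mem_Phi (Ne.symm hbc)))
            have hnp : stdE c - stdE a - (stdE a - stdE b) ∉ Phi n := by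
              intro h
              have h2 := Phi_neg_one_le h a
              simp [stdE, hab, Ne.symm hcd] at h2
              norm_num at h2
            have hc2 : cst (-(stdE a - stdE b)) (stdE c - stdE b) = -1 := by
              rw [neg_sub, cst_eval (Ne.symm hab) (Ne.symm hbc)
                (by rw [show stdE b - stdE a + (stdE c - stdE b) = stdE c - stdE a from by abel]
                    exact mem_Phi hcd)]
              simp [Ne.symm hcd]
            rw [e2, cst_zero_snd _ _ hnp, hc2]
            simp only [mul_assoc]
            rw [trig_add (dotR (stdE a - stdE b) q) (dotR (stdE c - stdE a) q) _ hsx hsy hs3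
                (by rw [← dotR_add', e2])]
            have hv1 : (stdE a - stdE b) c = 0 := by simp [stdE, hcd, Ne.symm hbc]
            have hv2 : (stdE a - stdE b) a = 1 := by simp [stdE, hab]
            rw [hv1, hv2]
            push_cast
            ring
          · -- pattern 5
            have hnp1 : stdE c - stdE d - (stdE a - stdE b) ∉ Phi n := by
              intro h
              have h1 : (stdE c - stdE d - (stdE a - stdE b)) c = 1 := by
                simp [stdE, hcd, Ne.symm hac, Ne.symm hbc]
              have h2 : (stdE c - stdE d - (stdE a - stdE b)) b = 1 := by
                simp [stdE, hbc, hbd, Ne.symm hab]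
              exact hbc (Phi_eq_one h h2 h1)
            have hnp2 : stdE c - stdE d + (stdE a - stdE b) ∉ Phi n := by
              intro h
              have h1 : (stdE c - stdE d + (stdE a - stdE b)) a = 1 := by
                simp [stdE, hac, had, hab]
              have h2 : (stdE c - stdE d + (stdE a - stdE b)) c = 1 := by
                simp [stdE, hcd, Ne.symm hac, Ne.symm hbc]
              exact hac (Phi_eq_one h h1 h2)
            rw [cst_zero_snd _ _ hnp1, cst_zero_snd _ _ hnp2]
            have hv1 : (stdE a - stdE b) c = 0 := by simp [stdE, Ne.symm hac, Ne.symm hbc]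
            have hv2 : (stdE a - stdE b) d = 0 := by simp [stdE, Ne.symm had, Ne.symm hbd]
            rw [hv1, hv2]
            push_cast
            ring

end
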